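/- For all integers n ≥ 4 and all integers k with 1 ≤ k ≤ n−1, ∑_{j2=k+2}^{n−1} ∑_{j1=k+1}^{j2−1} [∏_{m=j2+2}^{n} (1 − 6/C(m,2))] · (4/C(j2+1,2)) · [∏_{m=j1+2}^{j2} (1 − 3/C(m,2))] · (1/C(j1+1,2)) · [∏_{m=k+2}^{j1} (1 − 1/C(m,2))] · (1/C(k+1,2)) = 16(n+1)(n−k−1)(n−k−2)/((n−1)(n−2)(n−3)(k+1)(k+2)(k+3)(k+4)), where C(m,2) = m(m−1)/2 and empty products equal 1 (and an empty sum equals 0). -/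

import Mathlib

/-!
Writing `C(m, 2) = m (m - 1) / 2`, each factor `1 - C(r + 1, 2) / C(m, 2)` equals
`(m + r) (m - 1 - r) / (m (m - 1)) = S r m / S r (m - 1)` with `S r x = ∏_{i=1}^r (x + i) / (x - i)`,
so the three products telescope (with `r = 1, 2, 3`). The summand then factors as a constant times
`1 / ((j₁ + 2) (j₁ + 3))` times a rational function of `j₂`, and both sums telescope as well.
-/

open Finset

noncomputable def choose2 (x : ℝ) : ℝ := x * (x - 1) / 2

noncomputable def shiftRatio (r : ℕ) (x : ℝ) : ℝ :=
  ∏ i ∈ range r, (x + (i + 1)) / (x - (i + 1))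

lemma shiftRatio_pos {r : ℕ} {x : ℝ} (h : (r : ℝ) < x) : 0 < shiftRatio r x := by
  refine prod_pos fun i hi => ?_
  have : (i : ℝ) + 1 ≤ r := by exact_mod_cast mem_range.mp hi
  exact div_pos (by linarith) (by linarith)

lemma shiftRatio_succ_div {r : ℕ} {x : ℝ} (h : (r : ℝ) < x) :
    shiftRatio r (x + 1) / shiftRatio r x = (x + 1 + r) * (x - r) / ((x + 1) * x) := by
  have hx : 0 < x := (Nat.cast_nonneg r).trans_lt h
  induction r with
  | zero => simp [shiftRatio, div_self (by positivity : (x + 1) * x ≠ 0)]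
  | succ r ih =>
    push_cast at h ⊢
    simp only [shiftRatio, prod_range_succ] at ih ⊢
    rw [mul_div_mul_comm, ih (by linarith), show x + 1 - (r + 1) = x - r by ring]
    have : x - (r + 1) ≠ 0 := by linarith
    have : x - r ≠ 0 := by linarith
    field_simp
    ring

lemma one_sub_div_choose2_succ {r : ℕ} {x : ℝ} (h : (r : ℝ) < x) :
    1 - r * (r + 1) / 2 / choose2 (x + 1) = shiftRatio r (x + 1) / shiftRatio r x := by
  have hx : 0 < x := (Nat.cast_nonneg r).trans_lt h
  rw [shiftRatio_succ_div h, choose2, add_sub_cancel_right]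
  field_simp
  ring

lemma prod_one_sub_div_choose2 {c : ℝ} {r a b : ℕ} (hc : c = r * (r + 1) / 2) (hra : r < a)
    (hab : a ≤ b) :
    ∏ m ∈ Icc (a + 1) b, (1 - c / choose2 m) = shiftRatio r b / shiftRatio r a := by
  have hra' : (r : ℝ) < a := by exact_mod_cast hra
  induction b, hab using Nat.le_induction with
  | base => simp [div_self (shiftRatio_pos hra').ne']
  | succ b hab ih =>
    have hrb : (r : ℝ) < b := by exact_mod_cast hra.trans_le hab
    rw [prod_Icc_succ_top (by omega), ih, Nat.cast_succ, hc, one_sub_div_choose2_succ hrb,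
      mul_comm, div_mul_div_cancel₀ (shiftRatio_pos hrb).ne']

/-- The summand of `stmt2`, up to unfolding `choose2`. -/
noncomputable def coalescenceTerm (n k j1 j2 : ℕ) : ℝ :=
  (∏ m ∈ Icc (j2 + 2) n, (1 - 6 / choose2 m)) * (4 / choose2 ((j2 : ℝ) + 1)) *
    (∏ m ∈ Icc (j1 + 2) j2, (1 - 3 / choose2 m)) * (1 / choose2 ((j1 : ℝ) + 1)) *
    (∏ m ∈ Icc (k + 2) j1, (1 - 1 / choose2 m)) * (1 / choose2 ((k : ℝ) + 1))

lemma coalescenceTerm_eq {n k j1 j2 : ℕ} (hk : 1 ≤ k) (h1 : k < j1) (h2 : j1 < j2) (h3 : j2 < n) :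
    coalescenceTerm n k j1 j2 =
      32 * ((n : ℝ) + 1) * ((n : ℝ) + 2) * ((n : ℝ) + 3) /
          (((n : ℝ) - 1) * ((n : ℝ) - 2) * ((n : ℝ) - 3) * ((k : ℝ) + 1) * ((k : ℝ) + 2)) *
        (1 / (((j2 : ℝ) + 3) * ((j2 : ℝ) + 4))) * (1 / (((j1 : ℝ) + 2) * ((j1 : ℝ) + 3))) := by
  rw [coalescenceTerm, prod_one_sub_div_choose2 (r := 3) (a := j2 + 1) (by norm_num) (by omega) h3,
    prod_one_sub_div_choose2 (r := 2) (a := j1 + 1) (by norm_num) (by omega) h2,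
    prod_one_sub_div_choose2 (r := 1) (a := k + 1) (by norm_num) (by omega) h1]
  have hk' : (1 : ℝ) ≤ k := by exact_mod_cast hk
  have h1' : (k : ℝ) + 1 ≤ j1 := by exact_mod_cast h1
  have h2' : (j1 : ℝ) + 1 ≤ j2 := by exact_mod_cast h2
  have h3' : (j2 : ℝ) + 1 ≤ n := by exact_mod_cast h3
  simp only [shiftRatio, choose2, prod_range_succ, prod_range_zero]
  norm_num
  have : (n : ℝ) - 1 ≠ 0 := by linarith
  have : (n : ℝ) - 2 ≠ 0 := by linarith
  have : (n : ℝ) - 3 ≠ 0 := by linarith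
  have : (j2 : ℝ) + 1 - 2 ≠ 0 := by linarith
  have : (j2 : ℝ) + 1 - 3 ≠ 0 := by linarith
  have : (j2 : ℝ) - 1 ≠ 0 := by linarith
  have : (j2 : ℝ) - 2 ≠ 0 := by linarith
  have : (j1 : ℝ) + 1 - 2 ≠ 0 := by linarith
  have : (j1 : ℝ) - 1 ≠ 0 := by linarith
  have : (k : ℝ) ≠ 0 := by linarith
  have : (j1 : ℝ) ≠ 0 := by linarith
  have : (j2 : ℝ) ≠ 0 := by linarith
  field_simp
  ring

lemma sum_Ico_one_div_add_two_mul_add_three {a b : ℕ} (hab : a ≤ b) :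
    ∑ j ∈ Ico a b, 1 / (((j : ℝ) + 2) * ((j : ℝ) + 3)) = 1 / ((a : ℝ) + 2) - 1 / ((b : ℝ) + 2) := by
  rw [show 1 / ((a : ℝ) + 2) - 1 / ((b : ℝ) + 2) = -1 / ((b : ℝ) + 2) - -1 / ((a : ℝ) + 2) by ring,
    ← sum_Ico_sub (fun j : ℕ => -1 / ((j : ℝ) + 2)) hab]
  refine sum_congr rfl fun j _ => ?_
  push_cast
  field_simp
  ring

lemma sum_Ico_sub_div_add_two_mul_add_three_mul_add_four {k n : ℕ} (h : k + 2 ≤ n) :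
    ∑ j ∈ Ico (k + 2) n, ((j : ℝ) - k - 1) / (((j : ℝ) + 2) * ((j : ℝ) + 3) * ((j : ℝ) + 4)) =
      ((n : ℝ) - k - 1) * ((n : ℝ) - k - 2) / (2 * ((k : ℝ) + 4) * ((n : ℝ) + 2) * ((n : ℝ) + 3)) := by
  have := sum_Ico_sub
    (fun j : ℕ => ((j : ℝ) - k - 1) * ((j : ℝ) - k - 2) / (2 * ((k : ℝ) + 4) * ((j : ℝ) + 2) * ((j : ℝ) + 3))) h
  push_cast at this
  rw [show (k : ℝ) + 2 - k - 2 = 0 by ring, mul_zero, zero_div, sub_zero] at this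
  rw [← this]
  refine sum_congr rfl fun j _ => ?_
  field_simp
  ring

lemma sum_coalescenceTerm_Icc {n k j2 : ℕ} (hk : 1 ≤ k) (hj2 : k + 2 ≤ j2) (hn : j2 < n) :
    ∑ j1 ∈ Icc (k + 1) (j2 - 1), coalescenceTerm n k j1 j2 =
      32 * ((n : ℝ) + 1) * ((n : ℝ) + 2) * ((n : ℝ) + 3) /
          (((n : ℝ) - 1) * ((n : ℝ) - 2) * ((n : ℝ) - 3) * ((k : ℝ) + 1) * ((k : ℝ) + 2) *
            ((k : ℝ) + 3)) *
        (((j2 : ℝ) - k - 1) / (((j2 : ℝ) + 2) * ((j2 : ℝ) + 3) * ((j2 : ℝ) + 4))) := by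
  rw [Icc_sub_one_right_eq_Ico_of_not_isMin (by simp only [isMin_iff_eq_bot, Nat.bot_eq_zero]; omega),
    sum_congr rfl fun j1 hj1 => coalescenceTerm_eq hk (mem_Ico.mp hj1).1 (mem_Ico.mp hj1).2 hn,
    ← mul_sum, sum_Ico_one_div_add_two_mul_add_three (by omega)]
  have hk' : (1 : ℝ) ≤ k := by exact_mod_cast hk
  have hj2' : (k : ℝ) + 2 ≤ j2 := by exact_mod_cast hj2
  have hn' : (j2 : ℝ) + 1 ≤ n := by exact_mod_cast hn
  have : (n : ℝ) - 1 ≠ 0 := by linarith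
  have : (n : ℝ) - 2 ≠ 0 := by linarith
  have : (n : ℝ) - 3 ≠ 0 := by linarith
  push_cast
  field_simp
  ring

theorem stmt2 (n k : ℕ) (hk1 : 1 ≤ k) (hk2 : k ≤ n - 1) :
    ∑ j2 ∈ Finset.Icc (k + 2) (n - 1), ∑ j1 ∈ Finset.Icc (k + 1) (j2 - 1),
      (∏ m ∈ Finset.Icc (j2 + 2) n, (1 - 6 / ((m : ℝ) * ((m : ℝ) - 1) / 2))) *
        (4 / (((j2 : ℝ) + 1) * ((j2 : ℝ) + 1 - 1) / 2)) *
      (∏ m ∈ Finset.Icc (j1 + 2) j2, (1 - 3 / ((m : ℝ) * ((m : ℝ) - 1) / 2))) *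
        (1 / (((j1 : ℝ) + 1) * ((j1 : ℝ) + 1 - 1) / 2)) *
      (∏ m ∈ Finset.Icc (k + 2) j1, (1 - 1 / ((m : ℝ) * ((m : ℝ) - 1) / 2))) *
        (1 / (((k : ℝ) + 1) * ((k : ℝ) + 1 - 1) / 2)) =
    16 * ((n : ℝ) + 1) * ((n : ℝ) - (k : ℝ) - 1) * ((n : ℝ) - (k : ℝ) - 2) /
      (((n : ℝ) - 1) * ((n : ℝ) - 2) * ((n : ℝ) - 3) *
        ((k : ℝ) + 1) * ((k : ℝ) + 2) * ((k : ℝ) + 3) * ((k : ℝ) + 4)) := by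
  change ∑ j2 ∈ Icc (k + 2) (n - 1), ∑ j1 ∈ Icc (k + 1) (j2 - 1), coalescenceTerm n k j1 j2 = _
  obtain hkn | hkn : n ≤ k + 2 ∨ k + 3 ≤ n := by omega
  · rw [Icc_eq_empty (by omega), sum_empty, eq_comm, div_eq_zero_iff]
    left
    obtain rfl | rfl : n = k + 1 ∨ n = k + 2 := by omega
    all_goals push_cast; ring
  · rw [Icc_sub_one_right_eq_Ico_of_not_isMin (by simp only [isMin_iff_eq_bot, Nat.bot_eq_zero]; omega),
      sum_congr rfl fun j2 hj2 => sum_coalescenceTerm_Icc hk1 (mem_Ico.mp hj2).1 (mem_Ico.mp hj2).2,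
      ← mul_sum, sum_Ico_sub_div_add_two_mul_add_three_mul_add_four (by omega)]
    have hk' : (1 : ℝ) ≤ k := by exact_mod_cast hk1
    have hn' : (k : ℝ) + 3 ≤ n := by exact_mod_cast hkn
    have : (n : ℝ) - 1 ≠ 0 := by linarith
    have : (n : ℝ) - 2 ≠ 0 := by linarith
    have : (n : ℝ) - 3 ≠ 0 := by linarith
    field_simp
    ring
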